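/- arXiv:1606.04430 — 5 statements merged into one kernel-verified Lean document; each statement's English description precedes it below -/
import Mathlib

section
/- The IF density f_p(x) = (b q / c) ((x-x₀)/c)^{b-1} G_p(x)^{-q-1} (1 - (1/(p+1)) G_p(x)^{-q})^p with G_p(x) = (p+1)^{-1/q} + ((x-x₀)/c)^b integrates to 1 over [x₀, ∞), for all p, b, c, q > 0 and x₀ ≥ 0. -/
open Real Filter Set MeasureTheory
open scoped Topology

/-! By the chain rule the density is the derivative of the distribution function
`F = ifCdfProfile p q ∘ G`. Since `G x₀ = (p + 1) ^ (-1/q)` we get `F x₀ = 0`, and `G → ∞`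
gives `F → 1`; the density is nonnegative, so the improper fundamental theorem of calculus yields
`∫ f = 1 - 0`. -/

noncomputable def ifCdfProfile (p q y : ℝ) : ℝ := (1 - (1 / (p + 1)) * y ^ (-q)) ^ (p + 1)

lemma rpow_neg_one_div_rpow_neg {x q : ℝ} (hx : 0 ≤ x) (hq : q ≠ 0) :
    (x ^ (-(1 / q))) ^ (-q) = x := by
  rw [one_div, ← inv_neg, rpow_inv_rpow hx (neg_ne_zero.2 hq)]

lemma ifCdfProfile_rpow_neg_one_div {p q : ℝ} (hp : 0 < p + 1) (hq : q ≠ 0) :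
    ifCdfProfile p q ((p + 1) ^ (-(1 / q))) = 0 := by
  rw [ifCdfProfile, rpow_neg_one_div_rpow_neg hp.le hq, one_div_mul_cancel hp.ne', sub_self,
    zero_rpow hp.ne']

lemma one_sub_mul_rpow_neg_nonneg {p q y : ℝ} (hp : 0 < p + 1) (hq : 0 < q)
    (hy : (p + 1) ^ (-(1 / q)) ≤ y) : 0 ≤ 1 - (1 / (p + 1)) * y ^ (-q) := by
  rw [sub_nonneg, one_div_mul_eq_div, div_le_one hp]
  calc y ^ (-q) ≤ ((p + 1) ^ (-(1 / q))) ^ (-q) :=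
        rpow_le_rpow_of_nonpos (rpow_pos_of_pos hp _) hy (neg_nonpos.2 hq.le)
    _ = p + 1 := rpow_neg_one_div_rpow_neg hp.le hq.ne'

lemma hasDerivAt_ifCdfProfile {p q y : ℝ} (hp : 0 ≤ p) (hy : y ≠ 0) :
    HasDerivAt (ifCdfProfile p q)
      (q * y ^ (-q - 1) * (1 - (1 / (p + 1)) * y ^ (-q)) ^ p) y := by
  have hinner := (((hasDerivAt_id' y).rpow_const (p := -q) (Or.inl hy)).const_mul
    (1 / (p + 1))).const_sub 1
  refine (hinner.rpow_const (p := p + 1) (Or.inr (by linarith))).congr_deriv ?_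
  rw [add_sub_cancel_right]
  field_simp

lemma tendsto_ifCdfProfile_atTop (p : ℝ) {q : ℝ} (hq : 0 < q) :
    Tendsto (ifCdfProfile p q) atTop (𝓝 1) := by
  have hinner : Tendsto (fun y : ℝ => 1 - (1 / (p + 1)) * y ^ (-q)) atTop (𝓝 1) := by
    simpa using ((tendsto_rpow_neg_atTop hq).const_mul (1 / (p + 1))).const_sub 1
  have hpow := (continuousAt_rpow_const 1 (p + 1) (Or.inl one_ne_zero)).tendsto.comp hinner
  rwa [one_rpow] at hpow

lemma hasDerivAt_div_sub_rpow {x₀ b c x : ℝ} (hx : x ≠ x₀) (hc : c ≠ 0) :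
    HasDerivAt (fun t => ((t - x₀) / c) ^ b) (b / c * ((x - x₀) / c) ^ (b - 1)) x := by
  have hlin : HasDerivAt (fun t : ℝ => (t - x₀) / c) (1 / c) x := by
    simpa using ((hasDerivAt_id x).sub_const x₀).div_const c
  convert hlin.rpow_const (p := b) (Or.inl (div_ne_zero (sub_ne_zero.2 hx) hc)) using 1
  ring

lemma continuous_div_sub_rpow (x₀ c : ℝ) {b : ℝ} (hb : 0 ≤ b) :
    Continuous fun t : ℝ => ((t - x₀) / c) ^ b :=
  ((continuous_id.sub continuous_const).div_const c).rpow_const fun _ => Or.inr hb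

lemma tendsto_div_sub_rpow_atTop (x₀ : ℝ) {b c : ℝ} (hb : 0 < b) (hc : 0 < c) :
    Tendsto (fun t : ℝ => ((t - x₀) / c) ^ b) atTop atTop :=
  (tendsto_rpow_atTop hb).comp
    ((tendsto_atTop_add_const_right _ (-x₀) tendsto_id).atTop_div_const hc)

theorem IF_density_integral_eq_one_general (p b c q x₀ : ℝ) (hp : 0 < p) (hb : 0 < b)
    (hc : 0 < c) (hq : 0 < q) :
    let G : ℝ → ℝ := fun t => (p + 1) ^ (-(1 / q)) + ((t - x₀) / c) ^ b
    (∫ x in Ici x₀, (b * q / c) * ((x - x₀) / c) ^ (b - 1) * (G x) ^ (-q - 1) *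
      (1 - (1 / (p + 1)) * (G x) ^ (-q)) ^ p) = 1 := by
  intro G
  have hp1 : 0 < p + 1 := by linarith
  have hG₀ : G x₀ = (p + 1) ^ (-(1 / q)) := by simp [G, zero_rpow hb.ne']
  have hG_ge : ∀ x ∈ Ioi x₀, (p + 1) ^ (-(1 / q)) ≤ G x := fun x hx =>
    le_add_of_nonneg_right (rpow_nonneg (div_nonneg (sub_nonneg.2 (le_of_lt hx)) hc.le) _)
  have hG_pos : ∀ x ∈ Ioi x₀, 0 < G x := fun x hx =>
    (rpow_pos_of_pos hp1 _).trans_le (hG_ge x hx)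
  have hderiv : ∀ x ∈ Ioi x₀, HasDerivAt (ifCdfProfile p q ∘ G)
      ((b * q / c) * ((x - x₀) / c) ^ (b - 1) * (G x) ^ (-q - 1) *
        (1 - (1 / (p + 1)) * (G x) ^ (-q)) ^ p) x := fun x hx => by
    refine ((hasDerivAt_ifCdfProfile hp.le (hG_pos x hx).ne').comp x
      ((hasDerivAt_div_sub_rpow (ne_of_gt hx) hc.ne').const_add _)).congr_deriv ?_
    ring
  have hcont : ContinuousWithinAt (ifCdfProfile p q ∘ G) (Ici x₀) x₀ := by
    refine ContinuousAt.continuousWithinAt (ContinuousAt.comp ?_ ?_)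
    · rw [hG₀]
      exact (hasDerivAt_ifCdfProfile hp.le (rpow_pos_of_pos hp1 _).ne').continuousAt
    · exact ((continuous_div_sub_rpow x₀ c hb.le).const_add _).continuousAt
  have hlim : Tendsto (ifCdfProfile p q ∘ G) atTop (𝓝 1) :=
    (tendsto_ifCdfProfile_atTop p hq).comp
      (tendsto_atTop_add_const_left _ _ (tendsto_div_sub_rpow_atTop x₀ hb hc))
  rw [integral_Ici_eq_integral_Ioi, integral_Ioi_of_hasDerivAt_of_nonneg hcont hderiv ?_ hlim,
    Function.comp_apply, hG₀, ifCdfProfile_rpow_neg_one_div hp1 hq.ne', sub_zero]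
  intro x hx
  have := one_sub_mul_rpow_neg_nonneg hp1 hq (hG_ge x hx)
  have := (sub_pos.2 (mem_Ioi.1 hx)).le
  positivity

/-- The IF density integrates to 1 over `[x₀, ∞)` for all `p, b, c, q > 0`, `x₀ ≥ 0`. -/
theorem IF_density_integral_eq_one (p b c q x₀ : ℝ) (hp : 0 < p) (hb : 0 < b)
    (hc : 0 < c) (hq : 0 < q) (hx₀ : 0 ≤ x₀) :
    let G : ℝ → ℝ := fun t => (p + 1) ^ (-(1 / q)) + ((t - x₀) / c) ^ b
    (∫ x in Ici x₀, (b * q / c) * ((x - x₀) / c) ^ (b - 1) * (G x) ^ (-q - 1) *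
      (1 - (1 / (p + 1)) * (G x) ^ (-q)) ^ p) = 1 :=
  IF_density_integral_eq_one_general p b c q x₀ hp hb hc hq
end

section
/- For x₀ ≥ 0, c > 0, b > 0, q > 0 fixed and any x > x₀, the IF density f_p(x) converges as p → ∞ to the power law with exponential cut-off density f_∞(x) = (b q / c) ((x-x₀)/c)^{-bq-1} · exp(-((x-x₀)/c)^{-bq}). -/
open Real Filter Topology

/-! With `y = ((x - x₀)/c)^b`, the base `(p+1)^(-1/q) + y` tends to `y > 0`, so the middle factor
tends to `y^(-q-1)` by continuity of `rpow`, while the last factor has the form `(1 - h p/(p+1))^p`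
with `h p → y^(-q)` and therefore tends to `exp(-y^(-q))`. The limit is rewritten using
`((x - x₀)/c)^(b r) = y^r`. -/

lemma tendsto_add_one_rpow_neg_atTop {s : ℝ} (hs : 0 < s) :
    Tendsto (fun p : ℝ => (p + 1) ^ (-s)) atTop (𝓝 0) :=
  (tendsto_rpow_neg_atTop hs).comp (tendsto_atTop_add_const_right _ 1 tendsto_id)

lemma tendsto_mul_one_div_add_one_atTop :
    Tendsto (fun p : ℝ => p * (1 / (p + 1))) atTop (𝓝 1) := by
  have h : Tendsto (fun p : ℝ => 1 - (p + 1)⁻¹) atTop (𝓝 (1 - 0)) :=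
    tendsto_const_nhds.sub
      (tendsto_inv_atTop_zero.comp (tendsto_atTop_add_const_right _ 1 tendsto_id))
  rw [sub_zero] at h
  refine h.congr' ?_
  filter_upwards [eventually_gt_atTop 0] with p hp
  field_simp
  ring

lemma tendsto_one_sub_div_add_one_rpow_exp {h : ℝ → ℝ} {L : ℝ}
    (hh : Tendsto h atTop (𝓝 L)) :
    Tendsto (fun p : ℝ => (1 - 1 / (p + 1) * h p) ^ p) atTop (𝓝 (exp (-L))) := by
  have hlin : Tendsto (fun p : ℝ => p * -(1 / (p + 1) * h p)) atTop (𝓝 (-L)) := by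
    have h := (tendsto_mul_one_div_add_one_atTop.mul hh).neg
    rw [one_mul] at h
    exact h.congr fun p => by ring
  simpa only [sub_eq_add_neg] using tendsto_one_add_rpow_exp_of_tendsto hlin

theorem IF_density_tendsto_cutoff_general (b c q x₀ : ℝ) (hc : 0 < c)
    (hq : 0 < q) (x : ℝ) (hx : x₀ < x) :
    Tendsto (fun p : ℝ =>
        (b * q / c) * ((x - x₀) / c) ^ (b - 1) *
          ((p + 1) ^ (-(1 / q)) + ((x - x₀) / c) ^ b) ^ (-q - 1) *
          (1 - (1 / (p + 1)) * ((p + 1) ^ (-(1 / q)) + ((x - x₀) / c) ^ b) ^ (-q)) ^ p)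
      atTop
      (nhds ((b * q / c) * ((x - x₀) / c) ^ (b - 1) * ((x - x₀) / c) ^ (b * (-q - 1)) *
        Real.exp (-((x - x₀) / c) ^ (-(b * q))))) := by
  set z := (x - x₀) / c
  have hz : 0 < z := div_pos (sub_pos.mpr hx) hc
  have hy : z ^ b ≠ 0 := (rpow_pos_of_pos hz b).ne'
  have hG : Tendsto (fun p : ℝ => (p + 1) ^ (-(1 / q)) + z ^ b) atTop (𝓝 (z ^ b)) := by
    simpa using (tendsto_add_one_rpow_neg_atTop (one_div_pos.mpr hq)).add_const (z ^ b)
  rw [rpow_mul hz.le, neg_mul_eq_mul_neg, rpow_mul hz.le]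
  exact (tendsto_const_nhds.mul (hG.rpow_const (Or.inl hy))).mul
    (tendsto_one_sub_div_add_one_rpow_exp (hG.rpow_const (Or.inl hy)))

/-- For fixed `x₀ ≥ 0`, `b, c, q > 0` and `x > x₀`, the IF density `f_p(x)` converges,
as `p → ∞`, to the power law with exponential cut-off density
`(bq/c)((x-x₀)/c)^{b-1}((x-x₀)/c)^{b(-q-1)} exp(-((x-x₀)/c)^{-bq})`. -/
theorem IF_density_tendsto_cutoff (b c q x₀ : ℝ) (hb : 0 < b) (hc : 0 < c)
    (hq : 0 < q) (hx₀ : 0 ≤ x₀) (x : ℝ) (hx : x₀ < x) :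
    Tendsto (fun p : ℝ =>
        (b * q / c) * ((x - x₀) / c) ^ (b - 1) *
          ((p + 1) ^ (-(1 / q)) + ((x - x₀) / c) ^ b) ^ (-q - 1) *
          (1 - (1 / (p + 1)) * ((p + 1) ^ (-(1 / q)) + ((x - x₀) / c) ^ b) ^ (-q)) ^ p)
      atTop
      (nhds ((b * q / c) * ((x - x₀) / c) ^ (b - 1) * ((x - x₀) / c) ^ (b * (-q - 1)) *
        Real.exp (-((x - x₀) / c) ^ (-(b * q))))) :=
  IF_density_tendsto_cutoff_general b c q x₀ hc hq x hx
end

section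
/- For x₀ ≥ 0, c > 0, b > 0, q > 0 fixed and any x > x₀, the IF density f_p(x) converges as p → 0⁺ to the power law density f_0(x) = (b q / c) ((x-x₀)/c)^{b-1} (1 + ((x-x₀)/c)^b)^{-q-1}. -/
open Real Filter Set Topology

/-!
At `p = 0` the base `1 - (1 + t)^(-q)` of the last factor, with `t = ((x - x₀)/c)^b > 0`, is
strictly positive, so `p ↦ f_p(x)` is continuous at `0`: the factor `(⋯)^p` tends to `1` and
`G_p(x) → 1 + t`.
-/

lemma tendsto_rpow_of_tendsto_zero {α : Type*} {l : Filter α} {f g : α → ℝ} {a : ℝ}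
    (hf : Tendsto f l (𝓝 a)) (ha : a ≠ 0) (hg : Tendsto g l (𝓝 0)) :
    Tendsto (fun p => f p ^ g p) l (𝓝 1) := by
  simpa using hf.rpow hg (Or.inl ha)

lemma tendsto_add_one_rpow_neg_inv_add (q t : ℝ) :
    Tendsto (fun p : ℝ => (p + 1) ^ (-(1 / q)) + t) (𝓝 0) (𝓝 (1 + t)) := by
  have h : Tendsto (fun p : ℝ => p + 1) (𝓝 0) (𝓝 1) := by
    simpa using (continuous_add_const (1 : ℝ)).tendsto 0
  simpa using (h.rpow_const (Or.inl one_ne_zero)).add_const t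

section

variable {q t : ℝ}

lemma one_sub_one_add_rpow_neg_ne_zero (hq : 0 < q) (ht : 0 < t) : 1 - (1 + t) ^ (-q) ≠ 0 :=
  (sub_pos.2 (rpow_lt_one_of_one_lt_of_neg (by linarith) (neg_neg_of_pos hq))).ne'

lemma tendsto_one_sub_inv_mul_rpow_pow_self (hq : 0 < q) (ht : 0 < t) :
    Tendsto (fun p : ℝ => (1 - (1 / (p + 1)) * ((p + 1) ^ (-(1 / q)) + t) ^ (-q)) ^ p)
      (𝓝 0) (𝓝 1) := by
  have hinv : Tendsto (fun p : ℝ => 1 / (p + 1)) (𝓝 0) (𝓝 1) := by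
    simpa using ((continuous_add_const (1 : ℝ)).tendsto 0).inv₀ (by norm_num)
  have hG := (tendsto_add_one_rpow_neg_inv_add q t).rpow_const (p := -q) (Or.inl (by positivity))
  have hbase := tendsto_const_nhds (x := (1 : ℝ)) |>.sub (hinv.mul hG)
  rw [one_mul] at hbase
  exact tendsto_rpow_of_tendsto_zero hbase (one_sub_one_add_rpow_neg_ne_zero hq ht) tendsto_id

end

theorem IF_density_tendsto_powerlaw_general (b c q x₀ : ℝ) (hc : 0 < c)
    (hq : 0 < q) (x : ℝ) (hx : x₀ < x) :
    Tendsto (fun p : ℝ =>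
        (b * q / c) * ((x - x₀) / c) ^ (b - 1) *
          ((p + 1) ^ (-(1 / q)) + ((x - x₀) / c) ^ b) ^ (-q - 1) *
          (1 - (1 / (p + 1)) * ((p + 1) ^ (-(1 / q)) + ((x - x₀) / c) ^ b) ^ (-q)) ^ p)
      (nhdsWithin 0 (Ioi 0))
      (nhds ((b * q / c) * ((x - x₀) / c) ^ (b - 1) *
        (1 + ((x - x₀) / c) ^ b) ^ (-q - 1))) := by
  have ht : 0 < ((x - x₀) / c) ^ b := rpow_pos_of_pos (div_pos (sub_pos.2 hx) hc) b
  have hG := (tendsto_add_one_rpow_neg_inv_add q _).rpow_const (p := -q - 1)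
    (Or.inl (by positivity : (1 + ((x - x₀) / c) ^ b) ≠ 0))
  have h := ((tendsto_const_nhds (x := b * q / c * ((x - x₀) / c) ^ (b - 1))).mul hG).mul
    (tendsto_one_sub_inv_mul_rpow_pow_self hq ht)
  rw [mul_one] at h
  exact h.mono_left nhdsWithin_le_nhds

/-- For fixed `x₀ ≥ 0`, `b, c, q > 0` and `x > x₀`, the IF density `f_p(x)` converges,
as `p → 0⁺`, to the power law density
`f_0(x) = (bq/c)((x-x₀)/c)^{b-1}(1 + ((x-x₀)/c)^b)^{-q-1}`. -/
theorem IF_density_tendsto_powerlaw (b c q x₀ : ℝ) (hb : 0 < b) (hc : 0 < c)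
    (hq : 0 < q) (hx₀ : 0 ≤ x₀) (x : ℝ) (hx : x₀ < x) :
    Tendsto (fun p : ℝ =>
        (b * q / c) * ((x - x₀) / c) ^ (b - 1) *
          ((p + 1) ^ (-(1 / q)) + ((x - x₀) / c) ^ b) ^ (-q - 1) *
          (1 - (1 / (p + 1)) * ((p + 1) ^ (-(1 / q)) + ((x - x₀) / c) ^ b) ^ (-q)) ^ p)
      (nhdsWithin 0 (Ioi 0))
      (nhds ((b * q / c) * ((x - x₀) / c) ^ (b - 1) *
        (1 + ((x - x₀) / c) ^ b) ^ (-q - 1))) :=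
  IF_density_tendsto_powerlaw_general b c q x₀ hc hq x hx
end

section
/- The median of the IF distribution with b > 0 and 0 < p < ∞ equals x₀ + c(p+1)^{-1/(bq)}((1 - 2^{-1/(p+1)})^{-1/q} - 1)^{1/b}, i.e., F_p evaluated at this point equals 1/2. -/
/-!
`F_p` has the closed-form quantile function
`Q(u) = x₀ + c (p+1)^{-1/(bq)} ((1 - u^{1/(p+1)})^{-1/q} - 1)^{1/b}`, because at `x = Q(u)` the
term `((x - x₀)/c)^b` is `(p+1)^{-1/q} ((1 - u^{1/(p+1)})^{-1/q} - 1)`, so that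
`G_p(x)^{-q} = (p+1)(1 - u^{1/(p+1)})` and `F_p(x) = (u^{1/(p+1)})^{p+1} = u`.
The median is `Q(1/2)`.
-/

open Real

namespace IF

noncomputable def G (p b c q x₀ x : ℝ) : ℝ := (p + 1) ^ (-(1 / q)) + ((x - x₀) / c) ^ b

noncomputable def cdf (p b c q x₀ x : ℝ) : ℝ :=
  (1 - (1 / (p + 1)) * G p b c q x₀ x ^ (-q)) ^ (p + 1)

noncomputable def quantile (p b c q x₀ u : ℝ) : ℝ :=
  x₀ + c * (p + 1) ^ (-(1 / (b * q))) * ((1 - u ^ (1 / (p + 1))) ^ (-(1 / q)) - 1) ^ (1 / b)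

variable {p b c q x₀ : ℝ}

lemma rpow_neg_one_div_rpow_neg {a : ℝ} (ha : 0 ≤ a) (hq : q ≠ 0) :
    (a ^ (-(1 / q))) ^ (-q) = a := by
  rw [← one_div_neg_eq_neg_one_div, one_div, rpow_inv_rpow ha (neg_ne_zero.mpr hq)]

lemma G_eq_of_sub_div_rpow {x A : ℝ} (hp : 0 ≤ p + 1) (hb : b ≠ 0) (hc : c ≠ 0) (hA : 0 ≤ A)
    (hx : x = x₀ + c * (p + 1) ^ (-(1 / (b * q))) * A ^ (1 / b)) :
    G p b c q x₀ x = (p + 1) ^ (-(1 / q)) * (1 + A) := by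
  have hsub : (x - x₀) / c = (p + 1) ^ (-(1 / (b * q))) * A ^ (1 / b) := by
    rw [hx]; field_simp; ring
  have hpow : ((p + 1) ^ (-(1 / (b * q))) * A ^ (1 / b)) ^ b = (p + 1) ^ (-(1 / q)) * A := by
    rw [mul_rpow (by positivity) (by positivity), ← rpow_mul hp, ← rpow_mul hA,
      one_div_mul_cancel hb, rpow_one]
    congr 2
    field_simp
  rw [G, hsub, hpow]
  ring

lemma cdf_eq_of_G_eq {x y : ℝ} (hp : 0 < p + 1) (hq : q ≠ 0) (hy : 0 ≤ y)
    (hG : G p b c q x₀ x = (p + 1) ^ (-(1 / q)) * y) :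
    cdf p b c q x₀ x = (1 - y ^ (-q)) ^ (p + 1) := by
  rw [cdf, hG, mul_rpow (by positivity) (by positivity), rpow_neg_one_div_rpow_neg hp.le hq,
    ← mul_assoc, one_div_mul_cancel hp.ne', one_mul]

theorem cdf_quantile {u : ℝ} (hp : 0 < p + 1) (hb : b ≠ 0) (hc : c ≠ 0) (hq : 0 < q)
    (hu₀ : 0 ≤ u) (hu₁ : u < 1) :
    cdf p b c q x₀ (quantile p b c q x₀ u) = u := by
  set s := 1 - u ^ (1 / (p + 1))
  have hs₀ : 0 < s := by
    have : u ^ (1 / (p + 1)) < 1 := rpow_lt_one hu₀ hu₁ (by positivity)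
    linarith
  have hs₁ : s ≤ 1 := by have := rpow_nonneg hu₀ (1 / (p + 1)); linarith
  have hA : 0 ≤ s ^ (-(1 / q)) - 1 := by
    have : 1 ≤ s ^ (-(1 / q)) :=
      one_le_rpow_of_pos_of_le_one_of_nonpos hs₀ hs₁ (neg_nonpos.mpr (by positivity))
    linarith
  have hG : G p b c q x₀ (quantile p b c q x₀ u) = (p + 1) ^ (-(1 / q)) * s ^ (-(1 / q)) := by
    rw [G_eq_of_sub_div_rpow (x := quantile p b c q x₀ u) hp.le hb hc hA rfl, add_sub_cancel]
  rw [cdf_eq_of_G_eq hp hq.ne' (rpow_nonneg hs₀.le _) hG,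
    rpow_neg_one_div_rpow_neg hs₀.le hq.ne', sub_sub_cancel, one_div,
    rpow_inv_rpow hu₀ hp.ne']

end IF

theorem IF_median_general (p b c q x₀ : ℝ) (hp : 0 < p) (hb : 0 < b) (hc : 0 < c)
    (hq : 0 < q) :
    let G : ℝ → ℝ := fun x => (p + 1) ^ (-(1 / q)) + ((x - x₀) / c) ^ b
    let F : ℝ → ℝ := fun x => (1 - (1 / (p + 1)) * (G x) ^ (-q)) ^ (p + 1)
    F (x₀ + c * (p + 1) ^ (-(1 / (b * q))) *
        ((1 - (2 : ℝ) ^ (-(1 / (p + 1)))) ^ (-(1 / q)) - 1) ^ (1 / b)) = 1 / 2 := by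
  intro G F
  have htwo : (2 : ℝ) ^ (-(1 / (p + 1))) = (1 / 2) ^ (1 / (p + 1)) := by
    rw [rpow_neg zero_le_two, ← inv_rpow zero_le_two, one_div 2]
  rw [htwo]
  show IF.cdf p b c q x₀ (IF.quantile p b c q x₀ (1 / 2)) = 1 / 2
  exact IF.cdf_quantile (by linarith) hb.ne' hc.ne' hq (by norm_num) (by norm_num)

/-- The median of the IF distribution with `b > 0` and `0 < p < ∞` is
`x₀ + c(p+1)^{-1/(bq)}((1 - 2^{-1/(p+1)})^{-1/q} - 1)^{1/b}`: `F_p` there equals `1/2`. -/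
theorem IF_median (p b c q x₀ : ℝ) (hp : 0 < p) (hb : 0 < b) (hc : 0 < c)
    (hq : 0 < q) (hx₀ : 0 ≤ x₀) :
    let G : ℝ → ℝ := fun x => (p + 1) ^ (-(1 / q)) + ((x - x₀) / c) ^ b
    let F : ℝ → ℝ := fun x => (1 - (1 / (p + 1)) * (G x) ^ (-q)) ^ (p + 1)
    F (x₀ + c * (p + 1) ^ (-(1 / (b * q))) *
        ((1 - (2 : ℝ) ^ (-(1 / (p + 1)))) ^ (-(1 / q)) - 1) ^ (1 / b)) = 1 / 2 :=
  IF_median_general p b c q x₀ hp hb hc hq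
end

section
/- If X has the IF3 density f_{p,1}(x) = (q/c)((p+1)^{-1/q} + (x-x₀)/c)^{-q-1}(1 - (1/(p+1))((p+1)^{-1/q} + (x-x₀)/c)^{-q})^p on [x₀, ∞) with q > 1, then E[X] = x₀ + c(p+1)^{1-1/q}(B(1 - 1/q, p+1) - 1/(p+1)). -/
/-!
The substitution `u = 1 - H(x)^(-q) / (p + 1)`, i.e. `x = x₀ + c a ((1 - u)^(-1/q) - 1)` with
`a = (p + 1)^(-1/q)`, maps `(0, 1)` increasingly onto `(x₀, ∞)` and turns the IF3 density into
`(p + 1) u^p`. Since `x = (x₀ - c a) + c a (1 - u)^(-1/q)`, the mean splits into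
`(x₀ - c a) (p + 1) ∫ u^p = x₀ - c a` and the Beta integral
`c a (p + 1) ∫ u^p (1 - u)^(-1/q) = c (p + 1)^(1 - 1/q) B(p + 1, 1 - 1/q)`.
-/

open Real Set MeasureTheory ProbabilityTheory

section Beta

variable {a b : ℝ}

-- The right-hand side is the integrand of `Complex.betaIntegral (a + 1) (b + 1)`.
lemma ofReal_rpow_mul_one_sub_rpow {x : ℝ} (hx₀ : 0 ≤ x) (hx₁ : x ≤ 1) :
    ((x ^ a * (1 - x) ^ b : ℝ) : ℂ)
      = (x : ℂ) ^ ((a + 1 : ℝ) - 1 : ℂ) * (1 - x) ^ ((b + 1 : ℝ) - 1 : ℂ) := by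
  push_cast [Complex.ofReal_cpow hx₀, Complex.ofReal_cpow (sub_nonneg.2 hx₁)]
  ring_nf

lemma integrableOn_rpow_mul_one_sub_rpow (ha : -1 < a) (hb : -1 < b) :
    IntegrableOn (fun x : ℝ ↦ x ^ a * (1 - x) ^ b) (Ioo 0 1) := by
  have hC := (Complex.betaIntegral_convergent (u := (a + 1 : ℝ)) (v := (b + 1 : ℝ))
    (by simp; linarith) (by simp; linarith)).1.mono_set Ioo_subset_Ioc_self
  refine IntegrableOn.congr_fun hC.re (fun x hx ↦ ?_) measurableSet_Ioo
  rw [← ofReal_rpow_mul_one_sub_rpow hx.1.le hx.2.le]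
  exact Complex.ofReal_re _

lemma integral_rpow_mul_one_sub_rpow (ha : -1 < a) (hb : -1 < b) :
    ∫ x in Ioo 0 1, x ^ a * (1 - x) ^ b = beta (a + 1) (b + 1) := by
  have h : Complex.betaIntegral (a + 1 : ℝ) (b + 1 : ℝ)
      = ((∫ x in (0 : ℝ)..1, x ^ a * (1 - x) ^ b : ℝ) : ℂ) := by
    rw [Complex.betaIntegral, ← intervalIntegral.integral_ofReal]
    refine intervalIntegral.integral_congr fun x hx ↦ ?_
    rw [uIcc_of_le zero_le_one] at hx
    exact (ofReal_rpow_mul_one_sub_rpow hx.1 hx.2).symm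
  rw [beta_eq_betaIntegralReal _ _ (by linarith) (by linarith), h, Complex.ofReal_re,
    intervalIntegral.integral_of_le zero_le_one, integral_Ioc_eq_integral_Ioo]

end Beta

lemma integral_Ioo_zero_one_rpow {s : ℝ} (hs : -1 < s) :
    ∫ x in Ioo 0 1, x ^ s = 1 / (s + 1) := by
  rw [← integral_Ioc_eq_integral_Ioo, ← intervalIntegral.integral_of_le zero_le_one,
    integral_rpow (Or.inl hs), one_rpow, zero_rpow (by linarith)]
  ring

section Substitution

variable {x₀ k r : ℝ}

lemma hasDerivAt_one_sub_rpow_neg {u : ℝ} (hu : u < 1) :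
    HasDerivAt (fun u ↦ x₀ + k * ((1 - u) ^ (-r) - 1)) (k * r * (1 - u) ^ (-r - 1)) u := by
  refine ((((hasDerivAt_id u).const_sub 1).rpow_const (Or.inl (sub_ne_zero.2 hu.ne'))).sub_const 1
    |>.const_mul k |>.const_add x₀).congr_deriv ?_
  simp only [id]
  ring

lemma strictMonoOn_one_sub_rpow_neg (hk : 0 < k) (hr : 0 < r) :
    StrictMonoOn (fun u ↦ x₀ + k * ((1 - u) ^ (-r) - 1)) (Iio 1) := by
  intro u hu v hv huv
  have : (1 - u) ^ (-r) < (1 - v) ^ (-r) :=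
    rpow_lt_rpow_of_neg (sub_pos.2 hv) (by linarith) (neg_neg_of_pos hr)
  dsimp only
  gcongr

lemma image_one_sub_rpow_neg_Ioo (hk : 0 < k) (hr : 0 < r) :
    (fun u ↦ x₀ + k * ((1 - u) ^ (-r) - 1)) '' Ioo 0 1 = Ioi x₀ := by
  ext x
  constructor
  · rintro ⟨u, ⟨hu₀, hu₁⟩, rfl⟩
    have : 1 < (1 - u) ^ (-r) :=
      one_lt_rpow_of_pos_of_lt_one_of_neg (by linarith) (by linarith) (neg_neg_of_pos hr)
    simp only [mem_Ioi, lt_add_iff_pos_right]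
    nlinarith
  · intro hx
    set t := (x - x₀) / k + 1
    have ht : 1 < t := by
      have : 0 < (x - x₀) / k := div_pos (sub_pos.2 hx) hk
      linarith
    refine ⟨1 - t ^ (-r⁻¹), ⟨?_, ?_⟩, ?_⟩
    · linarith [rpow_lt_one_of_one_lt_of_neg ht (neg_neg_of_pos (inv_pos.2 hr))]
    · linarith [rpow_pos_of_pos (zero_lt_one.trans ht) (-r⁻¹)]
    · dsimp only
      rw [sub_sub_cancel, ← rpow_mul (by linarith), neg_mul_neg, inv_mul_cancel₀ hr.ne',
        rpow_one]
      simp only [t]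
      field_simp
      ring

theorem integral_Ioi_eq_integral_Ioo_one_sub_rpow_neg {E : Type*} [NormedAddCommGroup E]
    [NormedSpace ℝ E] (hk : 0 < k) (hr : 0 < r) (g : ℝ → E) :
    ∫ x in Ioi x₀, g x
      = ∫ u in Ioo 0 1, (k * r * (1 - u) ^ (-r - 1)) • g (x₀ + k * ((1 - u) ^ (-r) - 1)) := by
  rw [← image_one_sub_rpow_neg_Ioo hk hr]
  exact integral_image_eq_integral_deriv_smul_of_monotoneOn measurableSet_Ioo
    (fun u hu ↦ (hasDerivAt_one_sub_rpow_neg hu.2).hasDerivWithinAt)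
    ((strictMonoOn_one_sub_rpow_neg hk hr).monotoneOn.mono fun u hu ↦ hu.2) g

end Substitution

noncomputable def IF3Density (p c q x₀ x : ℝ) : ℝ :=
  (q / c) * ((p + 1) ^ (-(1 / q)) + (x - x₀) / c) ^ (-q - 1)
    * (1 - (1 / (p + 1)) * ((p + 1) ^ (-(1 / q)) + (x - x₀) / c) ^ (-q)) ^ p

lemma IF3Density_comp_mul_deriv {p c q x₀ u : ℝ} (hp : 0 < p + 1) (hc : 0 < c) (hq : 0 < q)
    (hu : u < 1) :
    c * (p + 1) ^ (-(1 / q)) * (1 / q) * (1 - u) ^ (-(1 / q) - 1)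
        * IF3Density p c q x₀ (x₀ + c * (p + 1) ^ (-(1 / q)) * ((1 - u) ^ (-(1 / q)) - 1))
      = (p + 1) * u ^ p := by
  set a := (p + 1) ^ (-(1 / q))
  have ha : 0 < a := rpow_pos_of_pos hp _
  have h1u : 0 < 1 - u := sub_pos.2 hu
  have hs : 0 < (1 - u) ^ (-(1 / q)) := rpow_pos_of_pos h1u _
  have hH : a + (x₀ + c * a * ((1 - u) ^ (-(1 / q)) - 1) - x₀) / c
      = a * (1 - u) ^ (-(1 / q)) := by
    field_simp
    ring
  have hpow : (a * (1 - u) ^ (-(1 / q))) ^ (-q) = (p + 1) * (1 - u) := by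
    rw [mul_rpow ha.le hs.le, ← rpow_mul hp.le, ← rpow_mul h1u.le, neg_mul_neg,
      one_div_mul_cancel hq.ne', rpow_one, rpow_one]
  have hu' : 1 - 1 / (p + 1) * ((p + 1) * (1 - u)) = u := by
    field_simp
    ring
  rw [IF3Density, hH, rpow_sub_one (mul_pos ha hs).ne', hpow, hu', rpow_sub_one h1u.ne']
  field_simp

lemma integral_Ioi_IF3Density_smul {E : Type*} [NormedAddCommGroup E] [NormedSpace ℝ E]
    {p c q x₀ : ℝ} (hp : 0 < p + 1) (hc : 0 < c) (hq : 0 < q) (g : ℝ → E) :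
    ∫ x in Ioi x₀, IF3Density p c q x₀ x • g x
      = ∫ u in Ioo 0 1, ((p + 1) * u ^ p) •
          g (x₀ + c * (p + 1) ^ (-(1 / q)) * ((1 - u) ^ (-(1 / q)) - 1)) := by
  rw [integral_Ioi_eq_integral_Ioo_one_sub_rpow_neg (r := 1 / q)
    (mul_pos hc (rpow_pos_of_pos hp _)) (by positivity)]
  refine setIntegral_congr_fun measurableSet_Ioo fun u hu ↦ ?_
  rw [smul_smul, IF3Density_comp_mul_deriv hp hc hq hu.2]

theorem IF3_mean_general (p c q x₀ : ℝ) (hp : 0 < p) (hc : 0 < c) (hq : 1 < q) :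
    let H : ℝ → ℝ := fun x => (p + 1) ^ (-(1 / q)) + (x - x₀) / c
    (∫ x in Ici x₀,
        x * ((q / c) * (H x) ^ (-q - 1) * (1 - (1 / (p + 1)) * (H x) ^ (-q)) ^ p))
      = x₀ + c * (p + 1) ^ (1 - 1 / q) *
          (Real.Gamma (1 - 1 / q) * Real.Gamma (p + 1) / Real.Gamma ((1 - 1 / q) + (p + 1))
            - 1 / (p + 1)) := by
  intro H
  have hp₁ : 0 < p + 1 := by linarith
  have hq₀ : 0 < q := by linarith
  have hq₁ : -1 < -(1 / q) := by
    rw [neg_lt_neg_iff, div_lt_one hq₀]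
    exact hq
  set a := (p + 1) ^ (-(1 / q))
  have hapow : a * (p + 1) = (p + 1) ^ (1 - 1 / q) := by
    rw [← rpow_add_one hp₁.ne']
    ring_nf
  calc ∫ x in Ici x₀, x * IF3Density p c q x₀ x
      = ∫ u in Ioo 0 1, (p + 1) * u ^ p * (x₀ + c * a * ((1 - u) ^ (-(1 / q)) - 1)) := by
        rw [integral_Ici_eq_integral_Ioi]
        simpa only [smul_eq_mul, id, mul_comm (IF3Density _ _ _ _ _)] using
          integral_Ioi_IF3Density_smul (x₀ := x₀) hp₁ hc hq₀ id
    _ = ∫ u in Ioo 0 1,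
          (x₀ - c * a) * (p + 1) * u ^ p + c * a * (p + 1) * (u ^ p * (1 - u) ^ (-(1 / q))) := by
        congr 1 with u
        ring
    _ = _ := by
      rw [integral_add
          (((intervalIntegral.integrableOn_Ioo_rpow_iff one_pos).2 (by linarith)).const_mul _)
          ((integrableOn_rpow_mul_one_sub_rpow (by linarith) hq₁).const_mul _),
        integral_const_mul, integral_const_mul, integral_Ioo_zero_one_rpow (by linarith),
        integral_rpow_mul_one_sub_rpow (by linarith) hq₁, beta, ← hapow]
      field_simp
      ring_nf

/-- If `X` has the IF3 density on `[x₀, ∞)` with `0 < p < ∞` and `q > 1`, then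
`E[X] = x₀ + c(p+1)^{1-1/q}(B(1 - 1/q, p+1) - 1/(p+1))`, `B` being the Beta function. -/
theorem IF3_mean (p c q x₀ : ℝ) (hp : 0 < p) (hc : 0 < c) (hq : 1 < q)
    (hx₀ : 0 ≤ x₀) :
    let H : ℝ → ℝ := fun x => (p + 1) ^ (-(1 / q)) + (x - x₀) / c
    (∫ x in Ici x₀,
        x * ((q / c) * (H x) ^ (-q - 1) * (1 - (1 / (p + 1)) * (H x) ^ (-q)) ^ p))
      = x₀ + c * (p + 1) ^ (1 - 1 / q) *
          (Real.Gamma (1 - 1 / q) * Real.Gamma (p + 1) / Real.Gamma ((1 - 1 / q) + (p + 1))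
            - 1 / (p + 1)) :=
  IF3_mean_general p c q x₀ hp hc hq
end
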